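/- arXiv:2107.03574 — 2 statements merged into one kernel-verified Lean document; each statement's English description precedes it below -/
import Mathlib

section
/- Let p be a prime with p ≡ 1 (mod 4) and define g^1 and G = ∑_{t=0}^{2p-1} g^1_t·4^t as in the Kim et al. construction (g^1_t = 2·b_t for even t, g^1_t = 2·c_t + 1 for odd t, with b, c the Legendre sequences of period p). Then gcd(G, 4^p + 1) = 5 if 5 divides p + 2, and gcd(G, 4^p + 1) = 1 otherwise. -/
/-!
Modulo `4^p + 1` we have `4^p ≡ -1`, so folding the sum at `t = p` leaves
`∑_{t<p} (g_t - g_{p+t}) 4^t`. As `p` is odd, `g_t` and `g_{p+t}` sit at places of opposite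
parity, and since `b` and `c` are `p`-periodic and differ only at `0`, the pair contributes
`-(-4)^t`, plus `-2` at `t = 0`. Hence `G ≡ -(2 + M)` with `M = ∑_{t<p} (-4)^t = (4^p + 1)/5`.
As `M` is odd, `2 + M` is coprime to `M`, so the gcd is `gcd(2 + M, 5)`, and `M ≡ p (mod 5)`
because `-4 ≡ 1`.
-/

/-- The Legendre sequence `b` of period `p`. -/
def legb (p : ℕ) [Fact p.Prime] (t : ℕ) : ℤ :=
  if (t : ZMod p) = 0 then 0 else (1 - legendreSym p (t : ℤ)) / 2

/-- The Legendre sequence `c` of period `p`. -/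
def legc (p : ℕ) [Fact p.Prime] (t : ℕ) : ℤ :=
  if (t : ZMod p) = 0 then 1 else (1 - legendreSym p (t : ℤ)) / 2

open Finset

section Folding

variable {R : Type*} [CommRing R]

lemma sum_range_two_mul_mul_pow_eq (f : ℕ → R) (x : R) (n : ℕ) :
    ∑ t ∈ range (2 * n), f t * x ^ t =
      ∑ t ∈ range n, (f t - f (n + t)) * x ^ t +
        (∑ t ∈ range n, f (n + t) * x ^ t) * (x ^ n + 1) := by
  rw [two_mul, sum_range_add, sum_mul, ← sum_add_distrib, ← sum_add_distrib]
  refine sum_congr rfl fun t _ => ?_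
  ring

lemma pow_add_one_eq_mul_geom_sum_neg {n : ℕ} (hn : Odd n) (x : R) :
    x ^ n + 1 = (x + 1) * ∑ t ∈ range n, (-x) ^ t := by
  have h := mul_neg_geom_sum (-x) n
  rw [hn.neg_pow, sub_neg_eq_add, sub_neg_eq_add] at h
  rw [add_comm x, h, add_comm]

-- The sequence `g¹` of Kim et al., built from `b` and `c`.
def kimSeq (b c : ℕ → R) (t : ℕ) : R :=
  if t % 2 = 0 then 2 * b t else 2 * c t + 1

variable {b c : ℕ → R} {p : ℕ}

lemma kimSeq_sub_kimSeq_add (hp : Odd p) (hb : ∀ t, b (p + t) = b t) (hc : ∀ t, c (p + t) = c t)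
    (t : ℕ) : kimSeq b c t - kimSeq b c (p + t) = (-1) ^ t * (2 * (b t - c t) - 1) := by
  rw [Nat.odd_iff] at hp
  rcases Nat.mod_two_eq_zero_or_one t with ht | ht
  · have hpt : (p + t) % 2 = 1 := by omega
    simp only [kimSeq, ht, hpt, hb, hc, (Nat.even_iff.mpr ht).neg_one_pow, if_true, one_ne_zero,
      if_false]
    ring
  · have hpt : (p + t) % 2 = 0 := by omega
    simp only [kimSeq, ht, hpt, hb, hc, (Nat.odd_iff.mpr ht).neg_one_pow, if_true, one_ne_zero,
      if_false]
    ring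

lemma sum_kimSeq_mul_pow_eq (hp : Odd p) (hb : ∀ t, b (p + t) = b t) (hc : ∀ t, c (p + t) = c t)
    (hbc : ∀ t < p, b t - c t = if t = 0 then -1 else 0) (x : R) :
    ∑ t ∈ range (2 * p), kimSeq b c t * x ^ t =
      -(2 + ∑ t ∈ range p, (-x) ^ t) +
        (∑ t ∈ range p, kimSeq b c (p + t) * x ^ t) * (x ^ p + 1) := by
  rw [sum_range_two_mul_mul_pow_eq]
  congr 1
  have hterm : ∀ t ∈ range p, (kimSeq b c t - kimSeq b c (p + t)) * x ^ t =
      -(-x) ^ t - if t = 0 then 2 else 0 := by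
    intro t ht
    rw [kimSeq_sub_kimSeq_add hp hb hc, hbc t (mem_range.mp ht), neg_pow]
    split_ifs with h0
    · subst h0; ring
    · ring
  rw [sum_congr rfl hterm, sum_sub_distrib, sum_neg_distrib, sum_ite_eq' (range p) 0,
    if_pos (mem_range.mpr hp.pos)]
  ring

end Folding

theorem Int.ModEq.gcd_eq {a b n : ℤ} (h : a ≡ b [ZMOD n]) : Int.gcd a n = Int.gcd b n := by
  rw [← Int.gcd_emod, h, Int.gcd_emod]

theorem Int.gcd_mul_right_eq_of_isCoprime {a m : ℤ} (h : IsCoprime a m) (b : ℤ) :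
    Int.gcd a (b * m) = Int.gcd a b := by
  rw [Int.isCoprime_iff_gcd_eq_one] at h
  simp only [Int.gcd_eq_natAbs_gcd_natAbs, Int.natAbs_mul] at h ⊢
  exact Nat.Coprime.gcd_mul_right_cancel_right _ (Nat.Coprime.symm h)

theorem Nat.gcd_eq_ite_of_prime {q : ℕ} (hq : q.Prime) (n : ℕ) :
    Nat.gcd n q = if q ∣ n then q else 1 := by
  split_ifs with h
  · exact Nat.gcd_eq_right h
  · exact ((hq.coprime_iff_not_dvd).mpr h).symm

lemma geom_sum_modEq_of_modEq_one {a m : ℤ} (h : a ≡ 1 [ZMOD m]) (n : ℕ) :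
    ∑ i ∈ range n, a ^ i ≡ n [ZMOD m] := by
  simpa using Int.ModEq.sum (s := range n) fun i _ => h.pow i

section Legendre

variable (p : ℕ) [Fact p.Prime]

lemma legb_add_left (t : ℕ) : legb p (p + t) = legb p t := by
  simp [legb, legendreSym.mod p ((p : ℤ) + t), ← legendreSym.mod]

lemma legc_add_left (t : ℕ) : legc p (p + t) = legc p t := by
  simp [legc, legendreSym.mod p ((p : ℤ) + t), ← legendreSym.mod]

lemma legb_sub_legc_of_lt {t : ℕ} (ht : t < p) :
    legb p t - legc p t = if t = 0 then -1 else 0 := by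
  have : (t : ZMod p) = 0 ↔ t = 0 := by
    rw [ZMod.natCast_eq_zero_iff]
    exact ⟨fun h => Nat.eq_zero_of_dvd_of_lt h ht, fun h => h ▸ dvd_zero p⟩
  simp only [legb, legc, this]
  split_ifs <;> simp

end Legendre

theorem stmt7 (p : ℕ) [Fact p.Prime] (h1 : p % 4 = 1) :
    Int.gcd
      (∑ t ∈ Finset.range (2 * p),
        (if t % 2 = 0 then 2 * legb p t else 2 * legc p t + 1) * 4 ^ t)
      ((4:ℤ) ^ p + 1) = if 5 ∣ p + 2 then 5 else 1 := by
  have hp : Odd p := Nat.odd_iff.mpr (by omega)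
  change Int.gcd (∑ t ∈ range (2 * p), kimSeq (legb p) (legc p) t * 4 ^ t) _ = _
  rw [sum_kimSeq_mul_pow_eq hp (legb_add_left p) (legc_add_left p) (fun t => legb_sub_legc_of_lt p),
    Int.gcd_add_mul_right_left, Int.neg_gcd]
  set M := ∑ t ∈ range p, (-4 : ℤ) ^ t
  have hN : (4 : ℤ) ^ p + 1 = 5 * M := by
    linear_combination pow_add_one_eq_mul_geom_sum_neg hp (4 : ℤ)
  have hM : Odd M := by
    have : Odd ((4 : ℤ) ^ p + 1) := (Int.even_pow.mpr ⟨by decide, hp.pos.ne'⟩).add_one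
    rw [hN] at this
    exact (Int.odd_mul.mp this).2
  have hcop : IsCoprime (2 + M) M := by
    obtain ⟨k, hk⟩ := hM
    exact ⟨-k, k + 1, by rw [hk]; ring⟩
  have hMp : M ≡ p [ZMOD 5] := geom_sum_modEq_of_modEq_one (by decide) p
  rw [hN, Int.gcd_mul_right_eq_of_isCoprime hcop, (hMp.add_left 2).gcd_eq, add_comm]
  exact_mod_cast Nat.gcd_eq_ite_of_prime Nat.prime_five (p + 2)
end

section
/- Let p be an odd prime and let d be a prime divisor of 4^p - 1 with d ≠ 3 such that d divides 1 + ∑_{t=1}^{p-1} (t/p)·4^t, where p ≡ 3 (mod 4). Then d divides p + 1, and no such d exists (since 4^p ≡ 1 mod d and 4^{d-1} ≡ 1 mod d force p | d - 1, contradicting d | p+1 with d prime > 2). -/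
/-!
In `ZMod d` the element `4` is a primitive `p`-th root of unity, so the sum
`∑ (t/p) 4^t` is a quadratic Gauss sum and its square is `(-1/p) p = -p`. The hypothesis says
the sum is `-1` modulo `d`, hence `1 ≡ -p`, i.e. `d ∣ p + 1`. On the other hand the order `p`
of `4` divides `d - 1` by Fermat, so `d = p + 1`, an even number greater than `2`.
-/

open Finset

theorem ZMod.sum_univ_eq_sum_range {M : Type*} [AddCommMonoid M] (n : ℕ) [NeZero n]
    (f : ZMod n → M) : ∑ a, f a = ∑ t ∈ range n, f t :=
  Finset.sum_nbij' ZMod.val (fun t => (t : ZMod n)) (fun a _ => mem_range.mpr a.val_lt)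
    (fun _ _ => mem_univ _) (fun a _ => ZMod.natCast_zmod_val a)
    (fun _ ht => ZMod.val_cast_of_lt (mem_range.mp ht)) (fun a _ => by rw [ZMod.natCast_zmod_val])

theorem ZMod.isPrimitiveRoot_intCast_of_dvd {n p : ℕ} [Fact p.Prime] {a : ℤ}
    (h : (n : ℤ) ∣ a ^ p - 1) (h1 : ¬ (n : ℤ) ∣ a - 1) : IsPrimitiveRoot (a : ZMod n) p := by
  rw [IsPrimitiveRoot.iff_orderOf]
  apply orderOf_eq_prime
  · rw [← sub_eq_zero]
    exact_mod_cast (ZMod.intCast_zmod_eq_zero_iff_dvd _ n).2 h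
  · intro ha
    apply h1
    rw [← ZMod.intCast_zmod_eq_zero_iff_dvd]
    push_cast
    rw [ha, sub_self]

theorem Nat.Prime.not_dvd_add_one_of_dvd_sub_one {p d : ℕ} (hp : p.Prime) (hp2 : p ≠ 2)
    (hd : d.Prime) (h : p ∣ d - 1) : ¬ d ∣ p + 1 := by
  intro h'
  have := hd.two_le
  have hdp : d = p + 1 := le_antisymm (Nat.le_of_dvd (by omega) h')
    (by have := Nat.le_of_dvd (by omega) h; omega)
  have : d = 2 := hd.even_iff.mp (hdp ▸ (hp.odd_of_ne_two hp2).add_one)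
  have := hp.two_le
  omega

section QuadraticGaussSum

variable {R : Type*} [CommRing R] (p : ℕ) [Fact p.Prime]

def legendreChar (R : Type*) [CommRing R] (p : ℕ) [Fact p.Prime] : MulChar (ZMod p) R :=
  (quadraticChar (ZMod p)).ringHomComp (Int.castRingHom R)

theorem legendreChar_intCast (a : ℤ) : legendreChar R p a = legendreSym p a := by
  simp [legendreChar, legendreSym, MulChar.ringHomComp_apply]

theorem legendreChar_natCast (t : ℕ) : legendreChar R p t = legendreSym p t := by
  simpa using legendreChar_intCast (R := R) p t

theorem legendreChar_isQuadratic : (legendreChar R p).IsQuadratic :=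
  (quadraticChar_isQuadratic (ZMod p)).comp _

theorem legendreChar_ne_one [Nontrivial R] (hR : ringChar R ≠ 2) (hp : p ≠ 2) :
    legendreChar R p ≠ 1 := by
  obtain ⟨a, ha⟩ := quadraticChar_exists_neg_one' (F := ZMod p) (by rwa [ZMod.ringChar_zmod_n])
  rw [MulChar.ne_one_iff]
  refine ⟨a, ?_⟩
  simpa [legendreChar, MulChar.ringHomComp_apply, ha] using Ring.neg_one_ne_one_of_char_ne_two hR

theorem gaussSum_legendreChar_zmodChar {ζ : R} (hζ : ζ ^ p = 1) :
    gaussSum (legendreChar R p) (AddChar.zmodChar p hζ) =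
      ∑ t ∈ Icc 1 (p - 1), (legendreSym p t : R) * ζ ^ t := by
  have hp := (Fact.out : p.Prime).pos
  rw [gaussSum, ZMod.sum_univ_eq_sum_range, range_eq_Ico, sum_eq_sum_Ico_succ_bot hp]
  have hIco : Ico 1 p = Icc 1 (p - 1) := by ext; simp only [mem_Ico, mem_Icc]; omega
  simp only [legendreChar_natCast, AddChar.zmodChar_apply', hIco]
  simp [legendreSym.at_zero]

theorem sum_legendreSym_mul_pow_sq [IsDomain R] (hR : ringChar R ≠ 2) (hp : p ≠ 2) {ζ : R}
    (hζ : IsPrimitiveRoot ζ p) :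
    (∑ t ∈ Icc 1 (p - 1), (legendreSym p t : R) * ζ ^ t) ^ 2 = legendreSym p (-1) * p := by
  rw [← gaussSum_legendreChar_zmodChar p hζ.pow_eq_one,
    gaussSum_sq (legendreChar_ne_one p hR hp) (legendreChar_isQuadratic p)
      (AddChar.zmodChar_primitive_of_primitive_root p hζ), ZMod.card, ← legendreChar_intCast,
    Int.cast_neg, Int.cast_one]

end QuadraticGaussSum

theorem stmt18 (p : ℕ) [Fact p.Prime] (h3 : p % 4 = 3) (d : ℕ) (hd : d.Prime)
    (hd3 : d ≠ 3) (hdvd : (d : ℤ) ∣ (4:ℤ) ^ p - 1)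
    (hdiv : (d : ℤ) ∣ 1 + ∑ t ∈ Finset.Icc 1 (p - 1), legendreSym p (t : ℤ) * 4 ^ t) :
    (d : ℤ) ∣ (p : ℤ) + 1 ∧ False := by
  have : Fact d.Prime := ⟨hd⟩
  have hp : p.Prime := Fact.out
  have hp2 : p ≠ 2 := by omega
  have hd3' : ¬ (d : ℤ) ∣ 4 - 1 := by
    rw [show (4 : ℤ) - 1 = 3 by norm_num]
    exact_mod_cast mt (Nat.prime_dvd_prime_iff_eq hd Nat.prime_three).mp hd3
  have h4 : IsPrimitiveRoot (4 : ZMod d) p := by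
    simpa using ZMod.isPrimitiveRoot_intCast_of_dvd hdvd hd3'
  have h40 : (4 : ZMod d) ≠ 0 := h4.ne_zero hp.ne_zero
  have hd2 : d ≠ 2 := by rintro rfl; exact h40 rfl
  have hpd : p ∣ d - 1 := h4.dvd_of_pow_eq_one _ (ZMod.pow_card_sub_one_eq_one h40)
  have hsum : ∑ t ∈ Icc 1 (p - 1), (legendreSym p t : ZMod d) * 4 ^ t = -1 := by
    have := (ZMod.intCast_zmod_eq_zero_iff_dvd _ d).2 hdiv
    push_cast at this
    linear_combination this
  have hsq := sum_legendreSym_mul_pow_sq p (by rwa [ZMod.ringChar_zmod_n]) hp2 h4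
  rw [hsum, legendreSym.at_neg_one hp2, ZMod.χ₄_nat_three_mod_four h3] at hsq
  have hdp : (d : ℤ) ∣ p + 1 := by
    rw [← ZMod.intCast_zmod_eq_zero_iff_dvd]
    push_cast
    linear_combination hsq
  exact ⟨hdp, hp.not_dvd_add_one_of_dvd_sub_one hp2 hd hpd (by exact_mod_cast hdp)⟩
end
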